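/- arXiv:1903.04985 — 2 statements merged into one kernel-verified Lean document; each statement's English description precedes it below -/
import Mathlib

section
/- Let Ω be a locally compact Hausdorff space and Γ a nondegenerate Banach module over C₀(Ω). For all f, g ∈ C₀(Ω) and every s ∈ Γ one has ‖|f|•s − |g|•s‖ ≤ ‖f•s − g•s‖, where |f| ∈ C₀(Ω) denotes the pointwise modulus x ↦ |f(x)| (regarded as a 𝕜-valued function in C₀(Ω)). -/
open scoped ZeroAtInfty

noncomputable section

variable {𝕜 : Type*} [RCLike 𝕜] {Ω : Type*} [TopologicalSpace Ω]

/-- A Banach module structure over `C₀(Ω, 𝕜)` on a `𝕜`-Banach space `Γ`. -/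
structure C0Module (𝕜 : Type*) [RCLike 𝕜] (Ω : Type*) [TopologicalSpace Ω]
    (Γ : Type*) [NormedAddCommGroup Γ] [NormedSpace 𝕜 Γ] where
  smul : C₀(Ω, 𝕜) →L[𝕜] Γ →L[𝕜] Γ
  mul_smul : ∀ (f g : C₀(Ω, 𝕜)) (s : Γ), smul (f * g) s = smul f (smul g s)
  norm_smul_le : ∀ (f : C₀(Ω, 𝕜)) (s : Γ), ‖smul f s‖ ≤ ‖f‖ * ‖s‖

variable {Γ : Type*} [NormedAddCommGroup Γ] [NormedSpace 𝕜 Γ]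

/-- Nondegeneracy of a Banach module over `C₀(Ω, 𝕜)`. -/
def C0Module.Nondegenerate (M : C0Module 𝕜 Ω Γ) : Prop :=
  Dense (Submodule.span 𝕜 {x : Γ | ∃ (f : C₀(Ω, 𝕜)) (s : Γ), M.smul f s = x} : Set Γ)

/-- The pointwise modulus `|f| : x ↦ |f x|` of `f ∈ C₀(Ω, 𝕜)`, regarded as a `𝕜`-valued
function in `C₀(Ω, 𝕜)`. -/
def absC0 (f : C₀(Ω, 𝕜)) : C₀(Ω, 𝕜) where
  toFun := fun x => (‖f x‖ : 𝕜)
  continuous_toFun := RCLike.continuous_ofReal.comp f.continuous.norm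
  zero_at_infty' := by
    have h : Filter.Tendsto (fun x => ‖f x‖) (Filter.cocompact Ω) (nhds 0) := by
      simpa using f.zero_at_infty'.norm
    have h2 : Filter.Tendsto (fun r : ℝ => (r : 𝕜)) (nhds 0) (nhds 0) := by
      simpa using (RCLike.continuous_ofReal (K := 𝕜)).tendsto 0
    exact h2.comp h

lemma c0_norm_le (f : C₀(Ω, 𝕜)) {C : ℝ} (hC : 0 ≤ C) (h : ∀ x, ‖f x‖ ≤ C) : ‖f‖ ≤ C := by
  rw [← ZeroAtInftyContinuousMap.norm_toBCF_eq_norm]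
  exact (BoundedContinuousFunction.norm_le hC).mpr h

lemma c0_apply_norm_le (f : C₀(Ω, 𝕜)) (x : Ω) : ‖f x‖ ≤ ‖f‖ := by
  rw [← ZeroAtInftyContinuousMap.norm_toBCF_eq_norm]
  exact f.toBCF.norm_coe_le_norm x

/-- The auxiliary function `x ↦ h₁ x · conj (h₂ x) / (‖h₂ x‖² + ε)`. -/
def uAux (h₁ h₂ : C₀(Ω, 𝕜)) (ε : ℝ) (hε : 0 < ε) : C₀(Ω, 𝕜) where
  toFun x := h₁ x * (starRingEnd 𝕜) (h₂ x) * (((‖h₂ x‖ ^ 2 + ε)⁻¹ : ℝ) : 𝕜)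
  continuous_toFun := by
    have hd : Continuous fun x => ((‖h₂ x‖ ^ 2 + ε)⁻¹ : ℝ) :=
      ((h₂.continuous.norm.pow 2).add continuous_const).inv₀ fun x => (by positivity : (0:ℝ) < ‖h₂ x‖ ^ 2 + ε).ne'
    exact (h₁.continuous.mul ((RCLike.continuous_conj).comp h₂.continuous)).mul
      (RCLike.continuous_ofReal.comp hd)
  zero_at_infty' := by
    rw [tendsto_zero_iff_norm_tendsto_zero]
    have hb : ∀ x, ‖h₁ x * (starRingEnd 𝕜) (h₂ x) * (((‖h₂ x‖ ^ 2 + ε)⁻¹ : ℝ) : 𝕜)‖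
        ≤ ‖h₁ x‖ * (‖h₂‖ * ε⁻¹) := by
      intro x
      rw [norm_mul, norm_mul, RCLike.norm_conj, RCLike.norm_ofReal]
      have h1 : ‖h₂ x‖ ≤ ‖h₂‖ := c0_apply_norm_le h₂ x
      have h2 : |(‖h₂ x‖ ^ 2 + ε)⁻¹| ≤ ε⁻¹ := by
        rw [abs_of_nonneg (by positivity)]
        apply inv_anti₀ hε
        nlinarith [norm_nonneg (h₂ x)]
      have := mul_le_mul h1 h2 (abs_nonneg _) (norm_nonneg h₂)
      rw [mul_assoc]
      exact mul_le_mul_of_nonneg_left this (norm_nonneg _)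
    have hz : Filter.Tendsto (fun x => ‖h₁ x‖ * (‖h₂‖ * ε⁻¹)) (Filter.cocompact Ω)
        (nhds 0) := by
      have : Filter.Tendsto (fun x => ‖h₁ x‖) (Filter.cocompact Ω) (nhds 0) := by
        simpa using h₁.zero_at_infty'.norm
      simpa using this.mul_const (‖h₂‖ * ε⁻¹)
    exact squeeze_zero (fun x => norm_nonneg _) hb hz

lemma uAux_norm_le (h₁ h₂ : C₀(Ω, 𝕜)) (ε : ℝ) (hε : 0 < ε)
    (h : ∀ x, ‖h₁ x‖ ≤ ‖h₂ x‖) : ‖uAux h₁ h₂ ε hε‖ ≤ 1 := by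
  apply c0_norm_le _ zero_le_one
  intro x
  show ‖h₁ x * (starRingEnd 𝕜) (h₂ x) * (((‖h₂ x‖ ^ 2 + ε)⁻¹ : ℝ) : 𝕜)‖ ≤ 1
  rw [norm_mul, norm_mul, RCLike.norm_conj, RCLike.norm_ofReal,
    abs_of_nonneg (by positivity : (0:ℝ) ≤ (‖h₂ x‖ ^ 2 + ε)⁻¹)]
  rw [mul_inv_le_iff₀ (by positivity), one_mul]
  nlinarith [h x, norm_nonneg (h₁ x), norm_nonneg (h₂ x)]

lemma uAux_mul_sub_norm_le (h₁ h₂ : C₀(Ω, 𝕜)) (ε : ℝ) (hε : 0 < ε)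
    (h : ∀ x, ‖h₁ x‖ ≤ ‖h₂ x‖) :
    ‖uAux h₁ h₂ ε hε * h₂ - h₁‖ ≤ Real.sqrt ε := by
  apply c0_norm_le _ (Real.sqrt_nonneg ε)
  intro x
  have hx : (uAux h₁ h₂ ε hε * h₂ - h₁) x
      = h₁ x * ((starRingEnd 𝕜) (h₂ x) * h₂ x * (((‖h₂ x‖ ^ 2 + ε)⁻¹ : ℝ) : 𝕜) - 1) := by
    show h₁ x * (starRingEnd 𝕜) (h₂ x) * (((‖h₂ x‖ ^ 2 + ε)⁻¹ : ℝ) : 𝕜) * h₂ x - h₁ x = _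
    ring
  rw [hx, norm_mul]
  have hconj : (starRingEnd 𝕜) (h₂ x) * h₂ x = ((‖h₂ x‖ ^ 2 : ℝ) : 𝕜) := by
    rw [RCLike.conj_mul]
    norm_cast
  rw [hconj]
  have hval : ((‖h₂ x‖ ^ 2 : ℝ) : 𝕜) * (((‖h₂ x‖ ^ 2 + ε)⁻¹ : ℝ) : 𝕜) - 1
      = (((‖h₂ x‖ ^ 2 * (‖h₂ x‖ ^ 2 + ε)⁻¹ - 1 : ℝ)) : 𝕜) := by
    push_cast
    ring
  rw [hval, RCLike.norm_ofReal]
  set t := ‖h₂ x‖ with ht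
  have htnn : 0 ≤ t := norm_nonneg _
  have hden : 0 < t ^ 2 + ε := by positivity
  have habs : |t ^ 2 * (t ^ 2 + ε)⁻¹ - 1| = ε / (t ^ 2 + ε) := by
    rw [abs_of_nonpos]
    · field_simp
      ring
    · rw [sub_nonpos, mul_inv_le_iff₀ hden, one_mul]
      nlinarith
  rw [habs]
  -- ‖h₁ x‖ * (ε / (t² + ε)) ≤ t * ε / (t² + ε) ≤ √ε
  have hstep : ‖h₁ x‖ * (ε / (t ^ 2 + ε)) ≤ t * ε / (t ^ 2 + ε) := by
    rw [div_eq_mul_inv, div_eq_mul_inv, mul_assoc]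
    exact mul_le_mul_of_nonneg_right (h x) (by positivity)
  refine hstep.trans ?_
  rw [div_le_iff₀ hden]
  have hsq : Real.sqrt ε ^ 2 = ε := Real.sq_sqrt hε.le
  nlinarith [sq_nonneg (t - Real.sqrt ε), Real.sqrt_nonneg ε, hsq]

/-- Monotonicity of the module norm: `|h₁| ≤ |h₂|` pointwise implies
`‖h₁ • s‖ ≤ ‖h₂ • s‖`. -/
lemma norm_smul_mono (M : C0Module 𝕜 Ω Γ) (h₁ h₂ : C₀(Ω, 𝕜))
    (h : ∀ x, ‖h₁ x‖ ≤ ‖h₂ x‖) (s : Γ) : ‖M.smul h₁ s‖ ≤ ‖M.smul h₂ s‖ := by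
  refine le_of_forall_pos_le_add fun δ hδ => ?_
  set ε : ℝ := (δ / (‖s‖ + 1)) ^ 2 with hεdef
  have hs1 : (0:ℝ) < ‖s‖ + 1 := by positivity
  have hε : 0 < ε := by positivity
  set u := uAux h₁ h₂ ε hε with hu
  have key : M.smul h₁ s = M.smul (h₁ - u * h₂) s + M.smul u (M.smul h₂ s) := by
    rw [← M.mul_smul]
    rw [map_sub M.smul]
    simp [ContinuousLinearMap.sub_apply]
  calc ‖M.smul h₁ s‖ ≤ ‖M.smul (h₁ - u * h₂) s‖ + ‖M.smul u (M.smul h₂ s)‖ := by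
        rw [key]; exact norm_add_le _ _
    _ ≤ ‖h₁ - u * h₂‖ * ‖s‖ + ‖u‖ * ‖M.smul h₂ s‖ :=
        add_le_add (M.norm_smul_le _ _) (M.norm_smul_le _ _)
    _ ≤ Real.sqrt ε * ‖s‖ + 1 * ‖M.smul h₂ s‖ := by
        refine add_le_add ?_ (mul_le_mul_of_nonneg_right
          (uAux_norm_le h₁ h₂ ε hε h) (norm_nonneg _))
        refine mul_le_mul_of_nonneg_right ?_ (norm_nonneg s)
        have := uAux_mul_sub_norm_le h₁ h₂ ε hε h
        rwa [show h₁ - u * h₂ = -(u * h₂ - h₁) by abel, norm_neg]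
    _ ≤ ‖M.smul h₂ s‖ + δ := by
        rw [one_mul]
        have hsqrt : Real.sqrt ε = δ / (‖s‖ + 1) := by
          rw [hεdef, Real.sqrt_sq (by positivity)]
        rw [hsqrt, add_comm]
        gcongr
        rw [div_mul_eq_mul_div, div_le_iff₀ hs1]
        nlinarith [norm_nonneg s]

/-- In a nondegenerate Banach module over `C₀(Ω)`,
`‖|f| • s − |g| • s‖ ≤ ‖f • s − g • s‖` for all `f, g ∈ C₀(Ω)` and `s ∈ Γ`. -/
theorem norm_abs_smul_sub_abs_smul_le
    [LocallyCompactSpace Ω] [T2Space Ω] [CompleteSpace Γ]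
    (M : C0Module 𝕜 Ω Γ) (hM : M.Nondegenerate)
    (f g : C₀(Ω, 𝕜)) (s : Γ) :
    ‖M.smul (absC0 f) s - M.smul (absC0 g) s‖ ≤ ‖M.smul f s - M.smul g s‖ := by
  have e1 : M.smul (absC0 f) s - M.smul (absC0 g) s = M.smul (absC0 f - absC0 g) s := by
    rw [map_sub M.smul]; simp [ContinuousLinearMap.sub_apply]
  have e2 : M.smul f s - M.smul g s = M.smul (f - g) s := by
    rw [map_sub M.smul]; simp [ContinuousLinearMap.sub_apply]
  rw [e1, e2]
  apply norm_smul_mono M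
  intro x
  show ‖(absC0 f) x - (absC0 g) x‖ ≤ ‖f x - g x‖
  have : (absC0 f) x - (absC0 g) x = ((‖f x‖ - ‖g x‖ : ℝ) : 𝕜) := by
    show ((‖f x‖ : 𝕜)) - ((‖g x‖ : 𝕜)) = _
    push_cast
    ring
  rw [this, RCLike.norm_ofReal]
  exact abs_norm_sub_norm_le _ _

end
end

section
/- Let Ω be a locally compact Hausdorff space and Γ a nondegenerate Banach module over C₀(Ω). Then any U₀(Ω)-valued norm N on Γ is unique and is given by the formula N(s)(x) = inf{‖f•s‖ : f ∈ C₀(Ω) real-valued, f ≥ 0, f(x) = 1} for all s ∈ Γ and x ∈ Ω. -/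
open scoped ZeroAtInfty

noncomputable section

variable {𝕜 : Type*} [RCLike 𝕜] {Ω : Type*} [TopologicalSpace Ω]

variable {Γ : Type*} [NormedAddCommGroup Γ] [NormedSpace 𝕜 Γ]

/-- The inclusion `C₀(Ω, ℝ) ⊆ C₀(Ω, 𝕜)`. -/
def ofRealC0 (𝕜 : Type*) [RCLike 𝕜] {Ω : Type*} [TopologicalSpace Ω] (f : C₀(Ω, ℝ)) :
    C₀(Ω, 𝕜) where
  toFun := fun x => (f x : 𝕜)
  continuous_toFun := RCLike.continuous_ofReal.comp f.continuous
  zero_at_infty' := by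
    have h2 : Filter.Tendsto (fun r : ℝ => (r : 𝕜)) (nhds 0) (nhds 0) := by
      simpa using (RCLike.continuous_ofReal (K := 𝕜)).tendsto 0
    exact h2.comp f.zero_at_infty'

/-- The pointwise maximum of two functions in `C₀(Ω, ℝ)`. -/
def supC0 (f g : C₀(Ω, ℝ)) : C₀(Ω, ℝ) where
  toFun := fun x => max (f x) (g x)
  continuous_toFun := f.continuous.max g.continuous
  zero_at_infty' := by simpa using f.zero_at_infty'.max g.zero_at_infty'

/-- The AM-identity: `‖(f₁ ⊔ f₂) • s‖ = max ‖f₁ • s‖ ‖f₂ • s‖` for nonnegative real-valued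
`f₁, f₂ ∈ C₀(Ω, ℝ)`. -/
def C0Module.IsAM (M : C0Module 𝕜 Ω Γ) : Prop :=
  ∀ (f₁ f₂ : C₀(Ω, ℝ)), (∀ x, 0 ≤ f₁ x) → (∀ x, 0 ≤ f₂ x) → ∀ s : Γ,
    ‖M.smul (ofRealC0 𝕜 (supC0 f₁ f₂)) s‖ =
      max ‖M.smul (ofRealC0 𝕜 f₁) s‖ ‖M.smul (ofRealC0 𝕜 f₂) s‖

/-- A `U₀(Ω)`-valued norm on a Banach module `Γ` over `C₀(Ω, 𝕜)`. -/
structure IsU0Norm (M : C0Module 𝕜 Ω Γ) (N : Γ → Ω → ℝ) : Prop where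
  nonneg : ∀ (s : Γ) (x : Ω), 0 ≤ N s x
  upperSemicontinuous : ∀ s : Γ, UpperSemicontinuous (N s)
  zero_at_infty : ∀ s : Γ, ∀ ε > 0, ∃ K : Set Ω, IsCompact K ∧ ∀ x ∉ K, N s x ≤ ε
  sup_eq_norm : ∀ s : Γ, (⨆ x : Ω, N s x) = ‖s‖
  smul_eq : ∀ (f : C₀(Ω, 𝕜)) (s : Γ) (x : Ω), N (M.smul f s) x = ‖f x‖ * N s x
  subadd : ∀ (s₁ s₂ : Γ) (x : Ω), N (s₁ + s₂) x ≤ N s₁ x + N s₂ x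

/-- The canonical candidate for the `U₀(Ω)`-valued norm. -/
def normFormula (M : C0Module 𝕜 Ω Γ) (s : Γ) (x : Ω) : ℝ :=
  sInf {r : ℝ | ∃ f : C₀(Ω, ℝ), (∀ y, 0 ≤ f y) ∧ f x = 1 ∧ r = ‖M.smul (ofRealC0 𝕜 f) s‖}

open Set

theorem ZeroAtInfty.exists_bump [RegularSpace Ω] [LocallyCompactSpace Ω] {U : Set Ω} {x : Ω}
    (hU : IsOpen U) (hxU : x ∈ U) :
    ∃ g : C₀(Ω, ℝ), (∀ y, g y ∈ Icc 0 1) ∧ g x = 1 ∧ EqOn g 0 Uᶜ := by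
  obtain ⟨g, hg_one, hg_zero, hg_supp, hg_mem⟩ := exists_continuous_one_zero_of_isCompact
    isCompact_singleton hU.isClosed_compl (disjoint_compl_right_iff_subset.mpr
      (singleton_subset_iff.mpr hxU))
  exact ⟨⟨g, hg_supp.is_zero_at_infty⟩, hg_mem, hg_one rfl, hg_zero⟩

@[simp]
theorem ofRealC0_apply (f : C₀(Ω, ℝ)) (y : Ω) : ofRealC0 𝕜 f y = (f y : 𝕜) :=
  rfl

theorem norm_ofRealC0_apply (f : C₀(Ω, ℝ)) (y : Ω) : ‖ofRealC0 𝕜 f y‖ = |f y| := by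
  simp

namespace IsU0Norm

variable {M : C0Module 𝕜 Ω Γ} {N : Γ → Ω → ℝ}

theorem bddAbove_range (hN : IsU0Norm M N) (s : Γ) : BddAbove (range (N s)) := by
  by_contra hs
  -- `⨆` of an unbounded family is `0` in `ℝ`, which forces `s = 0`; but `N 0 = 0`.
  have hs_zero : s = 0 := by
    rw [← norm_eq_zero, ← hN.sup_eq_norm, Real.iSup_of_not_bddAbove hs]
  have hN_zero : N 0 = 0 := funext fun y => by
    simpa using hN.smul_eq 0 0 y
  exact hs ⟨0, by rintro _ ⟨y, rfl⟩; simp [hs_zero, hN_zero]⟩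

theorem le_norm (hN : IsU0Norm M N) (s : Γ) (x : Ω) : N s x ≤ ‖s‖ :=
  hN.sup_eq_norm s ▸ le_ciSup (hN.bddAbove_range s) x

theorem norm_apply_mul_le (hN : IsU0Norm M N) (f : C₀(Ω, 𝕜)) (s : Γ) (x : Ω) :
    ‖f x‖ * N s x ≤ ‖M.smul f s‖ :=
  hN.smul_eq f s x ▸ hN.le_norm _ x

theorem norm_smul_le_of_le_on (hN : IsU0Norm M N) {f : C₀(Ω, 𝕜)} {s : Γ} {U : Set Ω} {c : ℝ}
    (hc : 0 ≤ c) (hf_le : ∀ y, ‖f y‖ ≤ 1) (hf_zero : EqOn f 0 Uᶜ) (hNc : ∀ y ∈ U, N s y ≤ c) :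
    ‖M.smul f s‖ ≤ c := by
  rw [← hN.sup_eq_norm]
  refine Real.iSup_le (fun y => ?_) hc
  rw [hN.smul_eq]
  by_cases hy : y ∈ U
  · calc ‖f y‖ * N s y ≤ 1 * N s y := mul_le_mul_of_nonneg_right (hf_le y) (hN.nonneg s y)
      _ ≤ c := by rw [one_mul]; exact hNc y hy
  · simp [hf_zero hy, hc]

theorem le_normFormula [RegularSpace Ω] [LocallyCompactSpace Ω] (hN : IsU0Norm M N)
    (s : Γ) (x : Ω) : N s x ≤ normFormula M s x := by
  obtain ⟨g, hg_mem, hg_x, -⟩ := ZeroAtInfty.exists_bump isOpen_univ (mem_univ x)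
  refine le_csInf ⟨_, g, fun y => (hg_mem y).1, hg_x, rfl⟩ ?_
  rintro r ⟨f, hf_nonneg, hf_x, rfl⟩
  simpa [norm_ofRealC0_apply, hf_x] using hN.norm_apply_mul_le (ofRealC0 𝕜 f) s x

end IsU0Norm

theorem normFormula_le (M : C0Module 𝕜 Ω Γ) {f : C₀(Ω, ℝ)} (hf_nonneg : ∀ y, 0 ≤ f y)
    (s : Γ) {x : Ω} (hf_x : f x = 1) : normFormula M s x ≤ ‖M.smul (ofRealC0 𝕜 f) s‖ :=
  csInf_le ⟨0, by rintro r ⟨g, -, -, rfl⟩; exact norm_nonneg _⟩ ⟨f, hf_nonneg, hf_x, rfl⟩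

theorem u0Norm_unique_general
    [LocallyCompactSpace Ω] [T2Space Ω]
    (M : C0Module 𝕜 Ω Γ)
    (N : Γ → Ω → ℝ) (hN : IsU0Norm M N) :
    ∀ (s : Γ) (x : Ω), N s x = normFormula M s x := by
  intro s x
  refine le_antisymm (hN.le_normFormula s x) (le_of_forall_pos_le_add fun ε hε => ?_)
  -- Upper semicontinuity gives a neighbourhood `U` of `x` on which `N s < N s x + ε`;
  -- a bump at `x` supported in `U` is admissible in the infimum.
  obtain ⟨U, hU_lt, hU_open, hxU⟩ :=
    eventually_nhds_iff.mp (hN.upperSemicontinuous s x (N s x + ε) (by linarith))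
  obtain ⟨g, hg_mem, hg_x, hg_zero⟩ := ZeroAtInfty.exists_bump hU_open hxU
  calc normFormula M s x ≤ ‖M.smul (ofRealC0 𝕜 g) s‖ :=
        normFormula_le M (fun y => (hg_mem y).1) s hg_x
    _ ≤ N s x + ε := by
        refine hN.norm_smul_le_of_le_on (by linarith [hN.nonneg s x]) (fun y => ?_)
          (fun y hy => ?_) (fun y hy => (hU_lt y hy).le)
        · rw [norm_ofRealC0_apply, abs_of_nonneg (hg_mem y).1]; exact (hg_mem y).2
        · simp [hg_zero hy]

/-- The `U₀(Ω)`-valued norm on a nondegenerate Banach module over `C₀(Ω)` is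
unique and given by the infimum formula. -/
theorem u0Norm_unique
    [LocallyCompactSpace Ω] [T2Space Ω] [CompleteSpace Γ]
    (M : C0Module 𝕜 Ω Γ) (hM : M.Nondegenerate)
    (N : Γ → Ω → ℝ) (hN : IsU0Norm M N) :
    ∀ (s : Γ) (x : Ω), N s x = normFormula M s x :=
  u0Norm_unique_general M N hN

end
end
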